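/- Assume M₁ is positive definite and the Lagrangian l has a saddle point (x*, z*, y*). Let (xᵏ, zᵏ, yᵏ)_{k≥0} be a sequence generated by the AD-PMM algorithm. Then Σ_{k≥1} ‖x^{k+1} − xᵏ‖² < +∞, Σ_{k≥1} ‖y^{k+1} − yᵏ‖² < +∞, Σ_{k≥1} ‖z^{k+1} − zᵏ‖² < +∞, and there exists C ≥ 0 such that ‖Axᵏ − zᵏ‖ ≤ C/√k for all k ≥ 1. -/

import Mathlib

open scoped InnerProductSpace
open Filter

noncomputable section

section OpDefs

variable {E F : Type*} [NormedAddCommGroup E] [InnerProductSpace ℝ E]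
  [NormedAddCommGroup F] [InnerProductSpace ℝ F]

/-- `U ∈ S₊(E)`: continuous linear, self-adjoint and positive semidefinite. -/
def IsSplusOp (U : E →L[ℝ] E) : Prop :=
  (∀ x y : E, ⟪U x, y⟫_ℝ = ⟪x, U y⟫_ℝ) ∧ ∀ x : E, 0 ≤ ⟪x, U x⟫_ℝ

/-- The squared seminorm `‖x‖²_U := ⟪x, U x⟫`. -/
def opSq (U : E →L[ℝ] E) (x : E) : ℝ := ⟪x, U x⟫_ℝ

/-- Loewner order `U ⪰ V`. -/
def opLE (U V : E →L[ℝ] E) : Prop := ∀ x : E, ⟪x, V x⟫_ℝ ≤ ⟪x, U x⟫_ℝ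

/-- `U ∈ P_α(E)`, i.e. `U ∈ S₊(E)` and `U ⪰ α·Id`. -/
def IsPalphaOp (α : ℝ) (U : E →L[ℝ] E) : Prop :=
  IsSplusOp U ∧ ∀ x : E, α * ‖x‖ ^ 2 ≤ ⟪x, U x⟫_ℝ

/-- Properness of an extended-real-valued function. -/
def ERealProper (f : E → EReal) : Prop := (∀ x, f x ≠ ⊥) ∧ ∃ x, f x ≠ ⊤

/-- Convexity of an extended-real-valued function. -/
def ERealConvex (f : E → EReal) : Prop :=
  ∀ x y : E, ∀ a b : ℝ, 0 ≤ a → 0 ≤ b → a + b = 1 →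
    f (a • x + b • y) ≤ (a : EReal) * f x + (b : EReal) * f y

/-- Weak convergence of a sequence in a Hilbert space, tested against inner products. -/
def WeakConv (u : ℕ → E) (p : E) : Prop :=
  ∀ w : E, Tendsto (fun k => ⟪u k, w⟫_ℝ) atTop (nhds ⟪p, w⟫_ℝ)

/-- The Lagrangian `l(x,z,y) = f(x) + g(z) + ⟪y, Ax - z⟫`. -/
def Lagr (f : E → EReal) (g : F → EReal) (A : E →L[ℝ] F) (p : E) (q v : F) : EReal :=
  f p + g q + ((⟪v, A p - q⟫_ℝ : ℝ) : EReal)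

/-- The Lagrangian with an additional smooth summand `h`:
`l(x,z,y) = f(x) + h(x) + g(z) + ⟪y, Ax - z⟫`. -/
def LagrH (f : E → EReal) (h : E → ℝ) (g : F → EReal) (A : E →L[ℝ] F)
    (p : E) (q v : F) : EReal :=
  f p + ((h p : ℝ) : EReal) + g q + ((⟪v, A p - q⟫_ℝ : ℝ) : EReal)

/-- `(xs, zs, ys)` is a saddle point of `l`. -/
def IsSaddle (l : E → F → F → EReal) (xs : E) (zs ys : F) : Prop :=
  ∀ (p : E) (q v : F), l xs zs v ≤ l xs zs ys ∧ l xs zs ys ≤ l p q ys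

/-- `xk1` is a minimizer of `u ↦ f u + (c/2)‖Au - zk + c⁻¹ yk‖² + (1/2)‖u - xk‖²_M`. -/
def IsXUpdate (f : E → EReal) (A : E →L[ℝ] F) (c : ℝ) (M : E →L[ℝ] E)
    (xk : E) (zk yk : F) (xk1 : E) : Prop :=
  ∀ u : E,
    f xk1 + (((c/2) * ‖A xk1 - zk + c⁻¹ • yk‖ ^ 2 + (1/2) * opSq M (xk1 - xk) : ℝ) : EReal) ≤
    f u + (((c/2) * ‖A u - zk + c⁻¹ • yk‖ ^ 2 + (1/2) * opSq M (u - xk) : ℝ) : EReal)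

/-- `xk1` is a minimizer of the `x`-subproblem with linearized smooth part:
`u ↦ f u + ⟪u - xk, ∇h(xk)⟫ + (c/2)‖Au - zk + c⁻¹ yk‖² + (1/2)‖u - xk‖²_M`. -/
def IsXUpdateGrad (f : E → EReal) (h' : E → E) (A : E →L[ℝ] F) (c : ℝ) (M : E →L[ℝ] E)
    (xk : E) (zk yk : F) (xk1 : E) : Prop :=
  ∀ u : E,
    f xk1 + ((⟪xk1 - xk, h' xk⟫_ℝ + (c/2) * ‖A xk1 - zk + c⁻¹ • yk‖ ^ 2
        + (1/2) * opSq M (xk1 - xk) : ℝ) : EReal) ≤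
    f u + ((⟪u - xk, h' xk⟫_ℝ + (c/2) * ‖A u - zk + c⁻¹ • yk‖ ^ 2
        + (1/2) * opSq M (u - xk) : ℝ) : EReal)

/-- `zk1` is a minimizer of `w ↦ g w + (c/2)‖Ax - w + c⁻¹ yk‖² + (1/2)‖w - zk‖²_M`. -/
def IsZUpdate (g : F → EReal) (c : ℝ) (M : F →L[ℝ] F)
    (Ax zk yk zk1 : F) : Prop :=
  ∀ w : F,
    g zk1 + (((c/2) * ‖Ax - zk1 + c⁻¹ • yk‖ ^ 2 + (1/2) * opSq M (zk1 - zk) : ℝ) : EReal) ≤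
    g w + (((c/2) * ‖Ax - w + c⁻¹ • yk‖ ^ 2 + (1/2) * opSq M (w - zk) : ℝ) : EReal)

end OpDefs

/-!
Minimality and convexity give the optimality conditions of the two proximal subproblems,
`-A*(y (k+1) + c (z (k+1) - z k)) - M₁ (x (k+1) - x k) ∈ ∂f (x (k+1))` and
`y (k+1) - M₂ (z (k+1) - z k) ∈ ∂g (z (k+1))` (read off from a one-sided derivative along
segments, so no subdifferential calculus is needed). Paired with the saddle point, which gives
`A xs = zs`, `-A* ys ∈ ∂f xs` and `ys ∈ ∂g zs`, monotonicity of `∂f` and `∂g` yields the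
Fejér-type descent `V (k+1) + W (k+1) ≤ V k`, where `V` is the weighted squared distance of the
iterates to the saddle point and `W k = c⁻¹‖Δy‖² + c‖Δz‖² + ‖Δx‖²_{M₁} + ‖Δz‖²_{M₂}`; applied
to two consecutive iterates, monotonicity also shows that `W` is nonincreasing. Hence `∑ W < ∞`
and `(k+1) W k ≤ V 0 + W 0`. Since `A x (k+1) - z (k+1) = c⁻¹ (y (k+1) - y k)`, this is the
`O(1/√k)` rate, and positive definiteness of `M₁` turns `∑ ‖Δx‖²_{M₁} < ∞` into `∑ ‖Δx‖² < ∞`.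
-/

section InnerProduct

variable {E : Type*} [NormedAddCommGroup E] [InnerProductSpace ℝ E] {U : E →L[ℝ] E}

lemma IsSplusOp.opSq_nonneg (hU : IsSplusOp U) (a : E) : 0 ≤ opSq U a := hU.2 a

lemma IsSplusOp.opSq_add (hU : IsSplusOp U) (a b : E) :
    opSq U (a + b) = opSq U a + 2 * ⟪U a, b⟫_ℝ + opSq U b := by
  have hsymm : ⟪a, U b⟫_ℝ = ⟪U a, b⟫_ℝ := (hU.1 a b).symm
  simp only [opSq, map_add, inner_add_left, inner_add_right, hsymm, real_inner_comm (U a) b]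
  ring

lemma IsSplusOp.opSq_sub_eq (hU : IsSplusOp U) (a b c : E) :
    opSq U (a - c) = opSq U (b - c) + 2 * ⟪U (b - c), a - b⟫_ℝ + opSq U (a - b) := by
  rw [← hU.opSq_add, sub_add_sub_cancel']

lemma norm_sub_sq_eq (a b c : E) :
    ‖a - c‖ ^ 2 = ‖b - c‖ ^ 2 + 2 * ⟪b - c, a - b⟫_ℝ + ‖a - b‖ ^ 2 := by
  rw [← norm_add_sq_real, sub_add_sub_cancel']

lemma IsSplusOp.two_inner_sub_eq (hU : IsSplusOp U) (a b : E) :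
    2 * ⟪U (a - b), a⟫_ℝ = opSq U a - opSq U b + opSq U (a - b) := by
  have h := hU.opSq_add (a - b) b
  rw [sub_add_cancel] at h
  have hsplit := inner_add_right (𝕜 := ℝ) (U (a - b)) (a - b) b
  rw [sub_add_cancel, real_inner_comm (a - b), ← opSq] at hsplit
  linarith

lemma two_inner_sub_eq (a b : E) :
    2 * ⟪a - b, a⟫_ℝ = ‖a‖ ^ 2 - ‖b‖ ^ 2 + ‖a - b‖ ^ 2 := by
  rw [norm_sub_sq_real, inner_sub_left, real_inner_self_eq_norm_sq, real_inner_comm]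
  ring

lemma hasDerivAt_add_smul (v w : E) : HasDerivAt (fun t : ℝ => v + t • w) w 0 := by
  simpa using ((hasDerivAt_id (0 : ℝ)).smul_const w).const_add v

lemma IsSplusOp.hasDerivAt_opSq_add_smul (hU : IsSplusOp U) (v w : E) :
    HasDerivAt (fun t : ℝ => opSq U (v + t • w)) (2 * ⟪U v, w⟫_ℝ) 0 := by
  have hline := hasDerivAt_add_smul v w
  have := hline.inner ℝ (U.hasFDerivAt.comp_hasDerivAt 0 hline)
  simp only [zero_smul, add_zero, Function.comp_def] at this
  refine this.congr_deriv ?_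
  rw [← hU.1 w v, hU.1 v w, real_inner_comm (U w) v]
  ring

lemma hasDerivAt_norm_add_smul_sq (v w : E) :
    HasDerivAt (fun t : ℝ => ‖v + t • w‖ ^ 2) (2 * ⟪v, w⟫_ℝ) 0 := by
  simpa using (hasDerivAt_add_smul v w).norm_sq

end InnerProduct

section FirstOrder

variable {E F : Type*} [NormedAddCommGroup E] [InnerProductSpace ℝ E]
  [NormedAddCommGroup F] [InnerProductSpace ℝ F]

/-- First-order optimality for a minimizer of `f + q` with `f` convex: `-q'(x₁)` is a
subgradient of `f` at `x₁`. -/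
theorem ERealConvex.le_add_of_isMin_add {f : E → EReal} (hf : ERealConvex f) {q : E → ℝ}
    {x₁ u : E} {a b D : ℝ} (hmin : ∀ v, f x₁ + q x₁ ≤ f v + q v)
    (hx₁ : f x₁ = a) (hu : f u = b)
    (hq : HasDerivAt (fun t : ℝ => q (x₁ + t • (u - x₁))) D 0) : a ≤ b + D := by
  set φ := fun t : ℝ => q (x₁ + t • (u - x₁))
  have hslope : ∀ t ∈ Set.Ioo (0 : ℝ) 1, a - b ≤ t⁻¹ • (φ (0 + t) - φ 0) := by
    rintro t ⟨ht0, ht1⟩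
    have hconv := hf x₁ u (1 - t) t (by linarith) ht0.le (by ring)
    rw [hx₁, hu, ← EReal.coe_mul, ← EReal.coe_mul, ← EReal.coe_add,
      show (1 - t) • x₁ + t • u = x₁ + t • (u - x₁) by module] at hconv
    have hle := (hmin (x₁ + t • (u - x₁))).trans (add_le_add_left hconv _)
    rw [hx₁, ← EReal.coe_add, ← EReal.coe_add, EReal.coe_le_coe_iff] at hle
    have : t * (a - b) ≤ φ t - φ 0 := by simp only [φ, zero_smul, add_zero]; linarith
    rw [zero_add, smul_eq_mul, le_inv_mul_iff₀ ht0]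
    exact this
  have := ge_of_tendsto hq.tendsto_slope_zero_right
    (Filter.mem_of_superset (Ioo_mem_nhdsGT one_pos) hslope)
  linarith

lemma IsSplusOp.hasDerivAt_proxTerm {M : E →L[ℝ] E} (hM : IsSplusOp M) (c : ℝ) (p w : F)
    (v d : E) :
    HasDerivAt (fun t : ℝ => c / 2 * ‖p + t • w‖ ^ 2 + 1 / 2 * opSq M (v + t • d))
      (c * ⟪p, w⟫_ℝ + ⟪M v, d⟫_ℝ) 0 := by
  refine (((hasDerivAt_norm_add_smul_sq p w).const_mul (c / 2)).add
    ((hM.hasDerivAt_opSq_add_smul v d).const_mul (1 / 2))).congr_deriv ?_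
  ring

theorem IsXUpdate.le_add_inner {f : E → EReal} (hf : ERealConvex f) {A : E →L[ℝ] F} {c : ℝ}
    {M : E →L[ℝ] E} (hM : IsSplusOp M) {xk x₁ u : E} {zk yk : F}
    (h : IsXUpdate f A c M xk zk yk x₁) {a b : ℝ} (hx₁ : f x₁ = a) (hu : f u = b) :
    a ≤ b + (c * ⟪A x₁ - zk + c⁻¹ • yk, A (u - x₁)⟫_ℝ + ⟪M (x₁ - xk), u - x₁⟫_ℝ) := by
  refine hf.le_add_of_isMin_add
    (q := fun v => c / 2 * ‖A v - zk + c⁻¹ • yk‖ ^ 2 + 1 / 2 * opSq M (v - xk)) h hx₁ hu ?_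
  refine (hM.hasDerivAt_proxTerm c _ (A (u - x₁)) (x₁ - xk) (u - x₁)).congr_of_eventuallyEq
    (Eventually.of_forall fun t => ?_)
  simp only [map_add, map_smul]
  congr 4 <;> abel

theorem IsZUpdate.le_add_inner {g : F → EReal} (hg : ERealConvex g) {c : ℝ}
    {M : F →L[ℝ] F} (hM : IsSplusOp M) {Ax zk yk z₁ w : F}
    (h : IsZUpdate g c M Ax zk yk z₁) {a b : ℝ} (hz₁ : g z₁ = a) (hw : g w = b) :
    a ≤ b + (c * ⟪Ax - z₁ + c⁻¹ • yk, -(w - z₁)⟫_ℝ + ⟪M (z₁ - zk), w - z₁⟫_ℝ) := by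
  refine hg.le_add_of_isMin_add
    (q := fun v => c / 2 * ‖Ax - v + c⁻¹ • yk‖ ^ 2 + 1 / 2 * opSq M (v - zk)) h hz₁ hw ?_
  refine (hM.hasDerivAt_proxTerm c _ (-(w - z₁)) (z₁ - zk) (w - z₁)).congr_of_eventuallyEq
    (Eventually.of_forall fun t => ?_)
  simp only [smul_neg]
  congr 4 <;> abel

end FirstOrder

section Proper

variable {E : Type*}

lemma ERealProper.ne_top_of_isMin_add {f : E → EReal} (hf : ERealProper f) {q : E → ℝ} {x₁ : E}
    (hmin : ∀ v, f x₁ + q x₁ ≤ f v + q v) : f x₁ ≠ ⊤ := by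
  obtain ⟨v, hv⟩ := hf.2
  intro htop
  have := hmin v
  rw [htop, EReal.top_add_of_ne_bot (EReal.coe_ne_bot _), top_le_iff] at this
  exact EReal.add_ne_top hv (EReal.coe_ne_top _) this

lemma ERealProper.coe_toReal {f : E → EReal} (hf : ERealProper f) {u : E} (hu : f u ≠ ⊤) :
    ((f u).toReal : EReal) = f u :=
  EReal.coe_toReal hu (hf.1 u)

end Proper

section Saddle

variable {E F : Type*} [NormedAddCommGroup E] [InnerProductSpace ℝ E]
  [NormedAddCommGroup F] [InnerProductSpace ℝ F]
  {f : E → EReal} {g : F → EReal} {A : E →L[ℝ] F}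

lemma lagr_eq_coe (hf : ERealProper f) (hg : ERealProper g) {p : E} {q v : F}
    (hp : f p ≠ ⊤) (hq : g q ≠ ⊤) :
    Lagr f g A p q v = (((f p).toReal + (g q).toReal + ⟪v, A p - q⟫_ℝ : ℝ) : EReal) := by
  rw [Lagr, ← hf.coe_toReal hp, ← hg.coe_toReal hq]
  simp only [EReal.coe_add, EReal.toReal_coe]

variable {xs : E} {zs ys : F}

lemma IsSaddle.ne_top (hf : ERealProper f) (hg : ERealProper g)
    (h : IsSaddle (Lagr f g A) xs zs ys) : f xs ≠ ⊤ ∧ g zs ≠ ⊤ := by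
  obtain ⟨p, hp⟩ := hf.2
  obtain ⟨q, hq⟩ := hg.2
  have hne : Lagr f g A xs zs ys ≠ ⊤ := ne_top_of_le_ne_top
    (by rw [lagr_eq_coe hf hg hp hq]; exact EReal.coe_ne_top _) (h p q ys).2
  rwa [Lagr, EReal.add_ne_top_iff_ne_top_left (EReal.coe_ne_bot _) (EReal.coe_ne_top _),
    EReal.add_ne_top_iff_ne_top₂ (hf.1 xs) (hg.1 zs)] at hne

lemma IsSaddle.apply_eq (hf : ERealProper f) (hg : ERealProper g)
    (h : IsSaddle (Lagr f g A) xs zs ys) : A xs = zs := by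
  obtain ⟨hxs, hzs⟩ := h.ne_top hf hg
  have hmax : ∀ v, ⟪v, A xs - zs⟫_ℝ ≤ ⟪ys, A xs - zs⟫_ℝ := fun v => by
    have := (h xs zs v).1
    rw [lagr_eq_coe hf hg hxs hzs, lagr_eq_coe hf hg hxs hzs, EReal.coe_le_coe_iff] at this
    linarith
  have := hmax (ys + (A xs - zs))
  rw [inner_add_left, real_inner_self_eq_norm_sq] at this
  rw [← sub_eq_zero, ← norm_eq_zero, ← sq_eq_zero_iff]
  linarith [sq_nonneg ‖A xs - zs‖]

lemma IsSaddle.toReal_le (hf : ERealProper f) (hg : ERealProper g)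
    (h : IsSaddle (Lagr f g A) xs zs ys) {p : E} {q : F} (hp : f p ≠ ⊤) (hq : g q ≠ ⊤) :
    (f xs).toReal + (g zs).toReal ≤ (f p).toReal + (g q).toReal + ⟪ys, A p - q⟫_ℝ := by
  obtain ⟨hxs, hzs⟩ := h.ne_top hf hg
  have := (h p q ys).2
  rw [lagr_eq_coe hf hg hxs hzs, lagr_eq_coe hf hg hp hq, EReal.coe_le_coe_iff,
    h.apply_eq hf hg, sub_self, inner_zero_right, add_zero] at this
  exact this

end Saddle

lemma summable_and_le_div_of_descent {V W : ℕ → ℝ} (hV : ∀ k, 0 ≤ V k) (hW : ∀ k, 0 ≤ W k)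
    (hanti : Antitone W) (hdesc : ∀ k, V (k + 1) + W (k + 1) ≤ V k) :
    Summable W ∧ ∀ k : ℕ, W k ≤ (V 0 + W 0) / (k + 1) := by
  have htel : ∀ N, V N + ∑ j ∈ Finset.range N, W (j + 1) ≤ V 0 := by
    intro N
    induction N with
    | zero => simp
    | succ N ih =>
      rw [Finset.sum_range_succ]
      linarith [hdesc N]
  have hsum : ∀ N, ∑ j ∈ Finset.range (N + 1), W j ≤ V 0 + W 0 := fun N => by
    rw [Finset.sum_range_succ']
    linarith [htel N, hV N]
  refine ⟨summable_of_sum_range_le (c := V 0 + W 0) hW fun N => ?_, fun k => ?_⟩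
  · exact (Finset.sum_le_sum_of_subset_of_nonneg (Finset.range_subset_range.mpr N.le_succ)
      fun j _ _ => hW j).trans (hsum N)
  · have hcard := (Finset.range (k + 1)).card_nsmul_le_sum W (W k)
      fun j hj => hanti (Nat.lt_succ_iff.mp (Finset.mem_range.mp hj))
    rw [Finset.card_range, nsmul_eq_mul, Nat.cast_succ] at hcard
    rw [le_div_iff₀ (by positivity), mul_comm]
    exact hcard.trans (hsum k)

lemma exists_pos_isPalphaOp {E : Type*} [NormedAddCommGroup E] [InnerProductSpace ℝ E]
    [FiniteDimensional ℝ E] {M : E →L[ℝ] E} (hM : IsSplusOp M)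
    (hpos : ∀ w : E, w ≠ 0 → 0 < ⟪w, M w⟫_ℝ) : ∃ α, 0 < α ∧ IsPalphaOp α M := by
  rcases subsingleton_or_nontrivial E with hE | hE
  · exact ⟨1, one_pos, hM, fun w => by simp [Subsingleton.elim w 0]⟩
  obtain ⟨w₀, hw₀, hmin⟩ := (isCompact_sphere (0 : E) 1).exists_isMinOn
    (NormedSpace.sphere_nonempty.mpr zero_le_one)
    (by fun_prop : Continuous fun w : E => ⟪w, M w⟫_ℝ).continuousOn
  refine ⟨_, hpos w₀ (ne_zero_of_mem_unit_sphere ⟨w₀, hw₀⟩), hM, fun w => ?_⟩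
  rcases eq_or_ne w 0 with rfl | hw
  · simp
  have hunit : ‖w‖⁻¹ • w ∈ Metric.sphere (0 : E) 1 := by
    simpa using norm_smul_inv_norm (𝕜 := ℝ) hw
  have hle : ⟪w₀, M w₀⟫_ℝ ≤ ⟪‖w‖⁻¹ • w, M (‖w‖⁻¹ • w)⟫_ℝ := hmin hunit
  rw [map_smul, real_inner_smul_left, real_inner_smul_right] at hle
  have hn : 0 < ‖w‖ := norm_pos_iff.mpr hw
  calc ⟪w₀, M w₀⟫_ℝ * ‖w‖ ^ 2 ≤ ‖w‖⁻¹ * (‖w‖⁻¹ * ⟪w, M w⟫_ℝ) * ‖w‖ ^ 2 := by gcongr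
    _ = ⟪w, M w⟫_ℝ := by field_simp

section ADPMM

variable {E F : Type*} [NormedAddCommGroup E] [InnerProductSpace ℝ E]
  [NormedAddCommGroup F] [InnerProductSpace ℝ F]

structure IsADPMM (f : E → EReal) (g : F → EReal) (A : E →L[ℝ] F) (c : ℝ) (M₁ : E →L[ℝ] E)
    (M₂ : F →L[ℝ] F) (x : ℕ → E) (z y : ℕ → F) : Prop where
  x_update : ∀ k, IsXUpdate f A c M₁ (x k) (z k) (y k) (x (k + 1))
  z_update : ∀ k, IsZUpdate g c M₂ (A (x (k + 1))) (z k) (y k) (z (k + 1))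
  y_update : ∀ k, y (k + 1) = y k + c • (A (x (k + 1)) - z (k + 1))

def adpmmStepSq (c : ℝ) (M₁ : E →L[ℝ] E) (M₂ : F →L[ℝ] F) (x : ℕ → E) (z y : ℕ → F)
    (k : ℕ) : ℝ :=
  c⁻¹ * ‖y (k + 1) - y k‖ ^ 2 + c * ‖z (k + 1) - z k‖ ^ 2 + opSq M₁ (x (k + 1) - x k)
    + opSq M₂ (z (k + 1) - z k)

/-- The last summand absorbs the cross term `⟪Δz, Δy⟫` of the descent estimate, which
monotonicity of `∂g` only controls up to `‖Δz‖²_{M₂}` of the previous step. -/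
def adpmmLyapunov (c : ℝ) (M₁ : E →L[ℝ] E) (M₂ : F →L[ℝ] F) (x : ℕ → E) (z y : ℕ → F)
    (xs : E) (zs ys : F) (k : ℕ) : ℝ :=
  c⁻¹ * ‖ys - y (k + 1)‖ ^ 2 + c * ‖zs - z (k + 1)‖ ^ 2 + opSq M₁ (xs - x (k + 1))
    + opSq M₂ (zs - z (k + 1)) + opSq M₂ (z (k + 1) - z k)

/-- `hF` and `hG` are monotonicity of `∂f` and `∂g` between two consecutive iterates, written in
the increments `a = Δy`, `p = Δz`, `u = Δx` (primed: the previous step). -/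
lemma weightedSq_le_of_inner_le {M₁ : E →L[ℝ] E} {M₂ : F →L[ℝ] F} (hM₁ : IsSplusOp M₁)
    (hM₂ : IsSplusOp M₂) {c : ℝ} (hc : 0 < c) {a a' p p' : F} {u u' : E}
    (hF : ⟪a + c • (p - p'), p + c⁻¹ • (a - a')⟫_ℝ + ⟪M₁ (u - u'), u⟫_ℝ ≤ 0)
    (hG : 0 ≤ ⟪a, p⟫_ℝ - ⟪M₂ (p - p'), p⟫_ℝ) :
    c⁻¹ * ‖a‖ ^ 2 + c * ‖p‖ ^ 2 + opSq M₁ u + opSq M₂ p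
      ≤ c⁻¹ * ‖a'‖ ^ 2 + c * ‖p'‖ ^ 2 + opSq M₁ u' + opSq M₂ p' := by
  have hexp : ⟪a + c • (p - p'), p + c⁻¹ • (a - a')⟫_ℝ
      = ⟪a, p⟫_ℝ + c⁻¹ * ⟪a - a', a⟫_ℝ + c * ⟪p - p', p⟫_ℝ + ⟪p - p', a - a'⟫_ℝ := by
    simp only [inner_add_left, inner_add_right, real_inner_smul_left, real_inner_smul_right,
      real_inner_comm (a - a') a]
    field_simp
    ring
  have hsq : c * ‖c⁻¹ • (a - a') + (p - p')‖ ^ 2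
      = c⁻¹ * ‖a - a'‖ ^ 2 + 2 * ⟪p - p', a - a'⟫_ℝ + c * ‖p - p'‖ ^ 2 := by
    rw [norm_add_sq_real, norm_smul, real_inner_smul_left, mul_pow, Real.norm_eq_abs, sq_abs,
      real_inner_comm]
    field_simp
  have hnn : 0 ≤ c * ‖c⁻¹ • (a - a') + (p - p')‖ ^ 2 := by positivity
  have ha := two_inner_sub_eq a a'
  have hp := two_inner_sub_eq p p'
  have hu := hM₁.two_inner_sub_eq u u'
  have hpM := hM₂.two_inner_sub_eq p p'
  have hu₀ := hM₁.opSq_nonneg (u - u')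
  have hp₀ := hM₂.opSq_nonneg (p - p')
  -- `2 (hF) - 2 (hG)` is the difference of the two sides plus the three squares `hnn, hu₀, hp₀`
  linear_combination 2 * hF + 2 * hG + hnn + hu₀ + hp₀ - 2 * hexp + hsq - c⁻¹ * ha - c * hp
    - hu - hpM

namespace IsADPMM

variable {f : E → EReal} {g : F → EReal} {A : E →L[ℝ] F} {c : ℝ} {M₁ : E →L[ℝ] E}
  {M₂ : F →L[ℝ] F} {x : ℕ → E} {z y : ℕ → F}

lemma residual_eq (h : IsADPMM f g A c M₁ M₂ x z y) (hc : c ≠ 0) (k : ℕ) :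
    A (x (k + 1)) - z (k + 1) = c⁻¹ • (y (k + 1) - y k) := by
  rw [h.y_update k, add_sub_cancel_left, smul_smul, inv_mul_cancel₀ hc, one_smul]

lemma f_ne_top (h : IsADPMM f g A c M₁ M₂ x z y) (hf : ERealProper f) (k : ℕ) :
    f (x (k + 1)) ≠ ⊤ :=
  hf.ne_top_of_isMin_add (h.x_update k) (q := fun v =>
    c / 2 * ‖A v - z k + c⁻¹ • y k‖ ^ 2 + 1 / 2 * opSq M₁ (v - x k))

lemma g_ne_top (h : IsADPMM f g A c M₁ M₂ x z y) (hg : ERealProper g) (k : ℕ) :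
    g (z (k + 1)) ≠ ⊤ :=
  hg.ne_top_of_isMin_add (h.z_update k) (q := fun v =>
    c / 2 * ‖A (x (k + 1)) - v + c⁻¹ • y k‖ ^ 2 + 1 / 2 * opSq M₂ (v - z k))

/-- `-A*(y (k+1) + c (z (k+1) - z k)) - M₁ (x (k+1) - x k) ∈ ∂f (x (k+1))`. -/
lemma f_toReal_le (h : IsADPMM f g A c M₁ M₂ x z y) (hf : ERealProper f) (hfc : ERealConvex f)
    (hM₁ : IsSplusOp M₁) (hc : c ≠ 0) (k : ℕ) {u : E} (hu : f u ≠ ⊤) :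
    (f (x (k + 1))).toReal ≤ (f u).toReal
      + ⟪y (k + 1) + c • (z (k + 1) - z k), A (u - x (k + 1))⟫_ℝ
      + ⟪M₁ (x (k + 1) - x k), u - x (k + 1)⟫_ℝ := by
  have key := (h.x_update k).le_add_inner hfc hM₁ (hf.coe_toReal (h.f_ne_top hf k)).symm
    (hf.coe_toReal hu).symm
  have hmult : c • (A (x (k + 1)) - z k + c⁻¹ • y k) = y (k + 1) + c • (z (k + 1) - z k) := by
    rw [h.y_update k, smul_add, smul_smul, mul_inv_cancel₀ hc, one_smul]
    module
  rw [← real_inner_smul_left, hmult] at key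
  linarith

/-- `y (k+1) - M₂ (z (k+1) - z k) ∈ ∂g (z (k+1))`. -/
lemma g_toReal_le (h : IsADPMM f g A c M₁ M₂ x z y) (hg : ERealProper g) (hgc : ERealConvex g)
    (hM₂ : IsSplusOp M₂) (hc : c ≠ 0) (k : ℕ) {w : F} (hw : g w ≠ ⊤) :
    (g (z (k + 1))).toReal ≤ (g w).toReal - ⟪y (k + 1), w - z (k + 1)⟫_ℝ
      + ⟪M₂ (z (k + 1) - z k), w - z (k + 1)⟫_ℝ := by
  have key := (h.z_update k).le_add_inner hgc hM₂ (hg.coe_toReal (h.g_ne_top hg k)).symm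
    (hg.coe_toReal hw).symm
  have hmult : c • (A (x (k + 1)) - z (k + 1) + c⁻¹ • y k) = y (k + 1) := by
    rw [h.y_update k, smul_add, smul_smul, mul_inv_cancel₀ hc, one_smul, add_comm]
  rw [← real_inner_smul_left, hmult, inner_neg_right] at key
  linarith

variable {xs : E} {zs ys : F}

lemma saddle_inner_nonneg (h : IsADPMM f g A c M₁ M₂ x z y) (hf : ERealProper f)
    (hfc : ERealConvex f) (hg : ERealProper g) (hgc : ERealConvex g) (hM₁ : IsSplusOp M₁)
    (hM₂ : IsSplusOp M₂) (hc : c ≠ 0) (hs : IsSaddle (Lagr f g A) xs zs ys) (k : ℕ) :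
    0 ≤ c⁻¹ * ⟪y (k + 1) - y k, ys - y (k + 1)⟫_ℝ + c * ⟪z (k + 1) - z k, zs - z (k + 1)⟫_ℝ
      - ⟪z (k + 1) - z k, y (k + 1) - y k⟫_ℝ + ⟪M₁ (x (k + 1) - x k), xs - x (k + 1)⟫_ℝ
      + ⟪M₂ (z (k + 1) - z k), zs - z (k + 1)⟫_ℝ := by
  obtain ⟨hxs, hzs⟩ := hs.ne_top hf hg
  have hF := h.f_toReal_le hf hfc hM₁ hc k hxs
  have hG := h.g_toReal_le hg hgc hM₂ hc k hzs
  have hS := hs.toReal_le hf hg (h.f_ne_top hf k) (h.g_ne_top hg k)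
  have hA : A (xs - x (k + 1)) = (zs - z (k + 1)) - c⁻¹ • (y (k + 1) - y k) := by
    rw [map_sub, hs.apply_eq hf hg, ← h.residual_eq hc k]
    abel
  rw [hA] at hF
  rw [h.residual_eq hc k] at hS
  have hexp : ⟪y (k + 1) + c • (z (k + 1) - z k), (zs - z (k + 1)) - c⁻¹ • (y (k + 1) - y k)⟫_ℝ
      = ⟪y (k + 1), zs - z (k + 1)⟫_ℝ - c⁻¹ * ⟪y (k + 1) - y k, y (k + 1)⟫_ℝ
        + c * ⟪z (k + 1) - z k, zs - z (k + 1)⟫_ℝ - ⟪z (k + 1) - z k, y (k + 1) - y k⟫_ℝ := by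
    simp only [inner_add_left, inner_sub_right, real_inner_smul_left, real_inner_smul_right,
      real_inner_comm (y (k + 1))]
    field_simp
    ring
  rw [real_inner_smul_right, real_inner_comm] at hS
  rw [inner_sub_right]
  linarith

lemma subdiff_g_monotone (h : IsADPMM f g A c M₁ M₂ x z y) (hg : ERealProper g)
    (hgc : ERealConvex g) (hM₂ : IsSplusOp M₂) (hc : c ≠ 0) (k : ℕ) :
    0 ≤ ⟪y (k + 2) - y (k + 1), z (k + 2) - z (k + 1)⟫_ℝ
      - ⟪M₂ ((z (k + 2) - z (k + 1)) - (z (k + 1) - z k)), z (k + 2) - z (k + 1)⟫_ℝ := by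
  have h₁ := h.g_toReal_le hg hgc hM₂ hc k (h.g_ne_top hg (k + 1))
  have h₂ := h.g_toReal_le hg hgc hM₂ hc (k + 1) (h.g_ne_top hg k)
  rw [show k + 1 + 1 = k + 2 from rfl] at h₁ h₂
  rw [← neg_sub (z (k + 2)), inner_neg_right, inner_neg_right] at h₂
  rw [inner_sub_left, map_sub, inner_sub_left]
  linarith

lemma subdiff_f_monotone (h : IsADPMM f g A c M₁ M₂ x z y) (hf : ERealProper f)
    (hfc : ERealConvex f) (hM₁ : IsSplusOp M₁) (hc : c ≠ 0) (k : ℕ) :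
    ⟪(y (k + 2) + c • (z (k + 2) - z (k + 1))) - (y (k + 1) + c • (z (k + 1) - z k)),
        A (x (k + 2) - x (k + 1))⟫_ℝ
      + ⟪M₁ (x (k + 2) - x (k + 1)) - M₁ (x (k + 1) - x k), x (k + 2) - x (k + 1)⟫_ℝ ≤ 0 := by
  have h₁ := h.f_toReal_le hf hfc hM₁ hc k (h.f_ne_top hf (k + 1))
  have h₂ := h.f_toReal_le hf hfc hM₁ hc (k + 1) (h.f_ne_top hf k)
  rw [← neg_sub (x (k + 2)), map_neg, inner_neg_right, inner_neg_right] at h₂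
  rw [inner_sub_left, inner_sub_left]
  linarith

lemma lyapunov_succ_add_stepSq_succ_le (h : IsADPMM f g A c M₁ M₂ x z y) (hf : ERealProper f)
    (hfc : ERealConvex f) (hg : ERealProper g) (hgc : ERealConvex g) (hM₁ : IsSplusOp M₁)
    (hM₂ : IsSplusOp M₂) (hc : c ≠ 0) (hs : IsSaddle (Lagr f g A) xs zs ys) (k : ℕ) :
    adpmmLyapunov c M₁ M₂ x z y xs zs ys (k + 1) + adpmmStepSq c M₁ M₂ x z y (k + 1)
      ≤ adpmmLyapunov c M₁ M₂ x z y xs zs ys k := by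
  have h₁ := h.saddle_inner_nonneg hf hfc hg hgc hM₁ hM₂ hc hs (k + 1)
  have h₂ := h.subdiff_g_monotone hg hgc hM₂ hc k
  have h₃ := hM₂.two_inner_sub_eq (z (k + 2) - z (k + 1)) (z (k + 1) - z k)
  have h₄ := hM₂.opSq_nonneg ((z (k + 2) - z (k + 1)) - (z (k + 1) - z k))
  have hcomm := real_inner_comm (y (k + 2) - y (k + 1)) (z (k + 2) - z (k + 1))
  simp only [adpmmLyapunov, adpmmStepSq]
  rw [show k + 1 + 1 = k + 2 from rfl] at h₁ ⊢
  rw [norm_sub_sq_eq ys (y (k + 2)) (y (k + 1)), norm_sub_sq_eq zs (z (k + 2)) (z (k + 1)),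
    hM₁.opSq_sub_eq xs (x (k + 2)) (x (k + 1)), hM₂.opSq_sub_eq zs (z (k + 2)) (z (k + 1))]
  linear_combination 2 * h₁ + 2 * h₂ - h₃ + h₄ - 2 * hcomm

lemma stepSq_succ_le (h : IsADPMM f g A c M₁ M₂ x z y) (hf : ERealProper f)
    (hfc : ERealConvex f) (hg : ERealProper g) (hgc : ERealConvex g) (hM₁ : IsSplusOp M₁)
    (hM₂ : IsSplusOp M₂) (hc : 0 < c) (k : ℕ) :
    adpmmStepSq c M₁ M₂ x z y (k + 1) ≤ adpmmStepSq c M₁ M₂ x z y k := by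
  have hF := h.subdiff_f_monotone hf hfc hM₁ hc.ne' k
  have hG := h.subdiff_g_monotone hg hgc hM₂ hc.ne' k
  have hA : A (x (k + 2) - x (k + 1))
      = (z (k + 2) - z (k + 1)) + c⁻¹ • ((y (k + 2) - y (k + 1)) - (y (k + 1) - y k)) := by
    rw [map_sub, smul_sub, ← h.residual_eq hc.ne' (k + 1), ← h.residual_eq hc.ne' k]
    abel
  rw [hA, ← map_sub, show (y (k + 2) + c • (z (k + 2) - z (k + 1)))
      - (y (k + 1) + c • (z (k + 1) - z k))
      = (y (k + 2) - y (k + 1)) + c • ((z (k + 2) - z (k + 1)) - (z (k + 1) - z k)) by module]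
    at hF
  exact weightedSq_le_of_inner_le hM₁ hM₂ hc hF hG

end IsADPMM

section Bounds

variable {c : ℝ} {M₁ : E →L[ℝ] E} {M₂ : F →L[ℝ] F} {x : ℕ → E} {z y : ℕ → F}

lemma adpmmStepSq_nonneg (hc : 0 ≤ c) (hM₁ : IsSplusOp M₁) (hM₂ : IsSplusOp M₂) (k : ℕ) :
    0 ≤ adpmmStepSq c M₁ M₂ x z y k := by
  have := hM₁.opSq_nonneg (x (k + 1) - x k)
  have := hM₂.opSq_nonneg (z (k + 1) - z k)
  unfold adpmmStepSq
  positivity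

lemma adpmmLyapunov_nonneg (hc : 0 ≤ c) (hM₁ : IsSplusOp M₁) (hM₂ : IsSplusOp M₂) (xs : E)
    (zs ys : F) (k : ℕ) : 0 ≤ adpmmLyapunov c M₁ M₂ x z y xs zs ys k := by
  have := hM₁.opSq_nonneg (xs - x (k + 1))
  have := hM₂.opSq_nonneg (zs - z (k + 1))
  have := hM₂.opSq_nonneg (z (k + 1) - z k)
  unfold adpmmLyapunov
  positivity

lemma le_adpmmStepSq (hc : 0 < c) (hM₁ : IsSplusOp M₁) (hM₂ : IsSplusOp M₂) (k : ℕ) :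
    opSq M₁ (x (k + 1) - x k) ≤ adpmmStepSq c M₁ M₂ x z y k
      ∧ ‖y (k + 1) - y k‖ ^ 2 ≤ c * adpmmStepSq c M₁ M₂ x z y k
      ∧ ‖z (k + 1) - z k‖ ^ 2 ≤ c⁻¹ * adpmmStepSq c M₁ M₂ x z y k := by
  have hy : 0 ≤ c⁻¹ * ‖y (k + 1) - y k‖ ^ 2 := by positivity
  have hz : 0 ≤ c * ‖z (k + 1) - z k‖ ^ 2 := by positivity
  have hx := hM₁.opSq_nonneg (x (k + 1) - x k)
  have hz' := hM₂.opSq_nonneg (z (k + 1) - z k)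
  unfold adpmmStepSq
  refine ⟨by linarith, ?_, ?_⟩
  · calc ‖y (k + 1) - y k‖ ^ 2 = c * (c⁻¹ * ‖y (k + 1) - y k‖ ^ 2) := by field_simp
      _ ≤ _ := by gcongr; linarith
  · calc ‖z (k + 1) - z k‖ ^ 2 = c⁻¹ * (c * ‖z (k + 1) - z k‖ ^ 2) := by field_simp
      _ ≤ _ := by gcongr; linarith

end Bounds

end ADPMM

theorem stmt4_general (n m : ℕ)
    (f : EuclideanSpace ℝ (Fin n) → EReal) (g : EuclideanSpace ℝ (Fin m) → EReal)
    (hfp : ERealProper f) (hfc : ERealConvex f)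
    (hgp : ERealProper g) (hgc : ERealConvex g)
    (A : EuclideanSpace ℝ (Fin n) →L[ℝ] EuclideanSpace ℝ (Fin m))
    (c : ℝ) (hc : 0 < c)
    (M₁ : EuclideanSpace ℝ (Fin n) →L[ℝ] EuclideanSpace ℝ (Fin n))
    (M₂ : EuclideanSpace ℝ (Fin m) →L[ℝ] EuclideanSpace ℝ (Fin m))
    (hM₁ : IsSplusOp M₁) (hM₂ : IsSplusOp M₂)
    (x : ℕ → EuclideanSpace ℝ (Fin n)) (z y : ℕ → EuclideanSpace ℝ (Fin m))
    (hx : ∀ k : ℕ, IsXUpdate f A c M₁ (x k) (z k) (y k) (x (k+1)))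
    (hz : ∀ k : ℕ, IsZUpdate g c M₂ (A (x (k+1))) (z k) (y k) (z (k+1)))
    (hy : ∀ k : ℕ, y (k+1) = y k + c • (A (x (k+1)) - z (k+1)))
    (hM₁pd : ∀ w : EuclideanSpace ℝ (Fin n), w ≠ 0 → 0 < ⟪w, M₁ w⟫_ℝ)
    (xs : EuclideanSpace ℝ (Fin n)) (zs ys : EuclideanSpace ℝ (Fin m))
    (hsp : IsSaddle (Lagr f g A) xs zs ys) :
    Summable (fun k : ℕ => ‖x (k+2) - x (k+1)‖ ^ 2) ∧
    Summable (fun k : ℕ => ‖y (k+2) - y (k+1)‖ ^ 2) ∧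
    Summable (fun k : ℕ => ‖z (k+2) - z (k+1)‖ ^ 2) ∧
    ∃ C : ℝ, 0 ≤ C ∧ ∀ k : ℕ, 1 ≤ k → ‖A (x k) - z k‖ ≤ C / Real.sqrt (k : ℝ) := by
  have h : IsADPMM f g A c M₁ M₂ x z y := ⟨hx, hz, hy⟩
  obtain ⟨hW, hWle⟩ := summable_and_le_div_of_descent
    (adpmmLyapunov_nonneg hc.le hM₁ hM₂ xs zs ys) (adpmmStepSq_nonneg hc.le hM₁ hM₂)
    (antitone_nat_of_succ_le (h.stepSq_succ_le hfp hfc hgp hgc hM₁ hM₂ hc))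
    (h.lyapunov_succ_add_stepSq_succ_le hfp hfc hgp hgc hM₁ hM₂ hc.ne' hsp)
  have hbound := fun k => le_adpmmStepSq (x := x) (z := z) (y := y) hc hM₁ hM₂ k
  set W := adpmmStepSq c M₁ M₂ x z y
  set B := adpmmLyapunov c M₁ M₂ x z y xs zs ys 0 + W 0
  have hW' : Summable fun k => W (k + 1) := (summable_nat_add_iff 1).mpr hW
  obtain ⟨α, hα, -, hαM₁⟩ := exists_pos_isPalphaOp hM₁ hM₁pd
  refine ⟨(hW'.mul_left α⁻¹).of_nonneg_of_le (fun _ => sq_nonneg _) fun k => ?_,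
    (hW'.mul_left c).of_nonneg_of_le (fun _ => sq_nonneg _) fun k => (hbound (k + 1)).2.1,
    (hW'.mul_left c⁻¹).of_nonneg_of_le (fun _ => sq_nonneg _) fun k => (hbound (k + 1)).2.2,
    √(c⁻¹ * B), Real.sqrt_nonneg _, fun k hk => ?_⟩
  · rw [le_inv_mul_iff₀ hα]
    exact (hαM₁ _).trans (hbound (k + 1)).1
  · obtain ⟨j, rfl⟩ := Nat.exists_eq_add_of_le' hk
    rw [← Real.sqrt_div' _ (Nat.cast_nonneg _)]
    refine Real.le_sqrt_of_sq_le ?_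
    rw [h.residual_eq hc.ne', norm_smul, mul_pow, Real.norm_eq_abs, sq_abs, Nat.cast_succ,
      mul_div_assoc]
    calc c⁻¹ ^ 2 * ‖y (j + 1) - y j‖ ^ 2 ≤ c⁻¹ ^ 2 * (c * W j) := by gcongr; exact (hbound j).2.1
      _ = c⁻¹ * W j := by field_simp
      _ ≤ c⁻¹ * (B / (j + 1)) := by gcongr; exact hWle j

theorem stmt4 (n m : ℕ)
    (f : EuclideanSpace ℝ (Fin n) → EReal) (g : EuclideanSpace ℝ (Fin m) → EReal)
    (hfp : ERealProper f) (hfc : ERealConvex f) (hfl : LowerSemicontinuous f)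
    (hgp : ERealProper g) (hgc : ERealConvex g) (hgl : LowerSemicontinuous g)
    (A : EuclideanSpace ℝ (Fin n) →L[ℝ] EuclideanSpace ℝ (Fin m))
    (c : ℝ) (hc : 0 < c)
    (M₁ : EuclideanSpace ℝ (Fin n) →L[ℝ] EuclideanSpace ℝ (Fin n))
    (M₂ : EuclideanSpace ℝ (Fin m) →L[ℝ] EuclideanSpace ℝ (Fin m))
    (hM₁ : IsSplusOp M₁) (hM₂ : IsSplusOp M₂)
    (x : ℕ → EuclideanSpace ℝ (Fin n)) (z y : ℕ → EuclideanSpace ℝ (Fin m))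
    (hx : ∀ k : ℕ, IsXUpdate f A c M₁ (x k) (z k) (y k) (x (k+1)))
    (hz : ∀ k : ℕ, IsZUpdate g c M₂ (A (x (k+1))) (z k) (y k) (z (k+1)))
    (hy : ∀ k : ℕ, y (k+1) = y k + c • (A (x (k+1)) - z (k+1)))
    (hM₁pd : ∀ w : EuclideanSpace ℝ (Fin n), w ≠ 0 → 0 < ⟪w, M₁ w⟫_ℝ)
    (xs : EuclideanSpace ℝ (Fin n)) (zs ys : EuclideanSpace ℝ (Fin m))
    (hsp : IsSaddle (Lagr f g A) xs zs ys) :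
    Summable (fun k : ℕ => ‖x (k+2) - x (k+1)‖ ^ 2) ∧
    Summable (fun k : ℕ => ‖y (k+2) - y (k+1)‖ ^ 2) ∧
    Summable (fun k : ℕ => ‖z (k+2) - z (k+1)‖ ^ 2) ∧
    ∃ C : ℝ, 0 ≤ C ∧ ∀ k : ℕ, 1 ≤ k → ‖A (x k) - z k‖ ≤ C / Real.sqrt (k : ℝ) :=
  stmt4_general n m f g hfp hfc hgp hgc A c hc M₁ M₂ hM₁ hM₂ x z y hx hz hy hM₁pd xs zs ys hsp
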